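/- If S and O are anticommuting Hermitian involutions and ρ is a density matrix with Tr[ρS] ≥ 1 - 2ε for 0 ≤ ε ≤ 1/2, then |Tr[ρO]| ≤ 2√ε. -/

import Mathlib

open scoped ComplexOrder

/-! With `s = Re Tr[ρS]` and `o = Re Tr[ρO]`, anticommutation makes `T = sS + oO` square to
`(s² + o²)·1`. Nonnegativity of the variance, `Tr[ρT]² ≤ Tr[ρT²]`, then reads
`(s² + o²)² ≤ s² + o²`, so `s² + o² ≤ 1`, and `o² ≤ 1 - (1 - 2ε)² ≤ 4ε`. -/

theorem smul_add_smul_mul_self_of_anticommute {R A : Type*} [CommRing R] [Ring A]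
    [Algebra R A] {x y : A} (hx : x * x = 1) (hy : y * y = 1) (hxy : x * y = -(y * x))
    (a b : R) : (a • x + b • y) * (a • x + b • y) = (a ^ 2 + b ^ 2) • 1 := by
  simp only [add_mul, mul_add, smul_mul_smul_comm, hx, hy, hxy]
  module

namespace Matrix

variable {n 𝕜 : Type*} [Fintype n]

theorem PosSemidef.trace_mul_conjTranspose_mul_self_nonneg {R : Type*} [CommRing R]
    [PartialOrder R] [StarRing R] [AddLeftMono R] {ρ : Matrix n n R} (hρ : ρ.PosSemidef)
    (B : Matrix n n R) : 0 ≤ (ρ * (Bᴴ * B)).trace := by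
  rw [← Matrix.mul_assoc, trace_mul_cycle]
  exact (hρ.mul_mul_conjTranspose_same B).trace_nonneg

variable [RCLike 𝕜] [DecidableEq n] {ρ : Matrix n n 𝕜}

theorem PosSemidef.re_trace_mul_sq_le (hρ : ρ.PosSemidef) (hρtr : ρ.trace = 1)
    {T : Matrix n n 𝕜} (hT : T.IsHermitian) :
    RCLike.re (ρ * T).trace ^ 2 ≤ RCLike.re (ρ * (T * T)).trace := by
  set t := RCLike.re (ρ * T).trace
  have hD : (T - (t : 𝕜) • 1).IsHermitian :=
    hT.sub (isHermitian_one.smul (RCLike.conj_ofReal t))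
  have hvar := (RCLike.nonneg_iff.mp
    (hρ.trace_mul_conjTranspose_mul_self_nonneg (T - (t : 𝕜) • 1))).1
  have hexpand : (ρ * ((T - (t : 𝕜) • 1) * (T - (t : 𝕜) • 1))).trace
      = (ρ * (T * T)).trace - ((2 * t : ℝ) : 𝕜) * (ρ * T).trace + ((t ^ 2 : ℝ) : 𝕜) := by
    simp only [sub_mul, mul_sub, Matrix.smul_mul, Matrix.mul_smul, Matrix.one_mul,
      Matrix.mul_one, trace_sub, trace_smul, smul_eq_mul, smul_smul, hρtr]
    push_cast
    ring
  rw [hD.eq, hexpand, map_add, map_sub, RCLike.re_ofReal_mul, RCLike.ofReal_re] at hvar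
  linarith

theorem PosSemidef.re_trace_mul_sq_add_sq_le_one (hρ : ρ.PosSemidef) (hρtr : ρ.trace = 1)
    {S O : Matrix n n 𝕜} (hS : S.IsHermitian) (hS2 : S * S = 1) (hO : O.IsHermitian)
    (hO2 : O * O = 1) (hanti : S * O = -(O * S)) :
    RCLike.re (ρ * S).trace ^ 2 + RCLike.re (ρ * O).trace ^ 2 ≤ 1 := by
  set s := RCLike.re (ρ * S).trace
  set o := RCLike.re (ρ * O).trace
  set T := (s : 𝕜) • S + (o : 𝕜) • O
  have hT : T.IsHermitian :=
    (hS.smul (RCLike.conj_ofReal s)).add (hO.smul (RCLike.conj_ofReal o))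
  have hmean : RCLike.re (ρ * T).trace = s ^ 2 + o ^ 2 := by
    rw [Matrix.mul_add, Matrix.mul_smul, Matrix.mul_smul, trace_add, trace_smul, trace_smul,
      smul_eq_mul, smul_eq_mul, map_add, RCLike.re_ofReal_mul, RCLike.re_ofReal_mul]
    ring
  have hsecond : RCLike.re (ρ * (T * T)).trace = s ^ 2 + o ^ 2 := by
    rw [smul_add_smul_mul_self_of_anticommute hS2 hO2 hanti, Matrix.mul_smul, Matrix.mul_one,
      trace_smul, hρtr]
    simp
  have hvar := hρ.re_trace_mul_sq_le hρtr hT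
  rw [hmean, hsecond] at hvar
  nlinarith [sq_nonneg s, sq_nonneg o]

end Matrix

theorem abs_trace_anticommuting_le_general {n : ℕ}
    (S O ρ : Matrix (Fin n) (Fin n) ℂ) (ε : ℝ)
    (hS : S.IsHermitian) (hS2 : S * S = 1)
    (hO : O.IsHermitian) (hO2 : O * O = 1)
    (hanti : S * O = -(O * S))
    (hρ : ρ.PosSemidef) (hρtr : ρ.trace = 1)
    (hε1 : ε ≤ 1 / 2)
    (htrS : 1 - 2 * ε ≤ ((ρ * S).trace).re) :
    |((ρ * O).trace).re| ≤ 2 * Real.sqrt ε := by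
  have hbloch := hρ.re_trace_mul_sq_add_sq_le_one hρtr hS hS2 hO hO2 hanti
  have hO_sq : ((ρ * O).trace).re ^ 2 ≤ 2 ^ 2 * ε := by
    simp only [RCLike.re_to_complex] at hbloch
    nlinarith
  calc |((ρ * O).trace).re| ≤ √(2 ^ 2 * ε) := Real.abs_le_sqrt hO_sq
    _ = 2 * √ε := by rw [Real.sqrt_mul (by positivity), Real.sqrt_sq zero_le_two]

/-- If `S` and `O` are anticommuting Hermitian involutions and `ρ` is a density matrix
with `Tr[ρS] ≥ 1 - 2ε` for `0 ≤ ε ≤ 1/2`, then `|Tr[ρO]| ≤ 2√ε`. -/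
theorem abs_trace_anticommuting_le {n : ℕ}
    (S O ρ : Matrix (Fin n) (Fin n) ℂ) (ε : ℝ)
    (hS : S.IsHermitian) (hS2 : S * S = 1)
    (hO : O.IsHermitian) (hO2 : O * O = 1)
    (hanti : S * O = -(O * S))
    (hρ : ρ.PosSemidef) (hρtr : ρ.trace = 1)
    (hε0 : 0 ≤ ε) (hε1 : ε ≤ 1 / 2)
    (htrS : 1 - 2 * ε ≤ ((ρ * S).trace).re) :
    |((ρ * O).trace).re| ≤ 2 * Real.sqrt ε :=
  abs_trace_anticommuting_le_general S O ρ ε hS hS2 hO hO2 hanti hρ hρtr hε1 htrS
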